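/- arXiv:0904.2841 — 4 statements merged into one kernel-verified Lean document; each statement's English description precedes it below -/
import Mathlib

section
/- For the root system C_n and the positive root 2ε_i, the set of unordered pairs of positive roots summing to 2ε_i is exactly {ε_i − ε_l, ε_i + ε_l} for i < l ≤ n; in particular there are exactly n − i such pairs. -/
/-!
Every positive root of `C_n` is `ε_a - ε_b`, `ε_a + ε_b` (`a < b`) or `2ε_a`. Evaluating
`α + γ = 2ε_i` at one or two well-chosen coordinates rules out every combination of shapes except
`(ε_a - ε_b) + (ε_c + ε_d)`, and there it forces `a = c = i` and `b = d`. The resulting pairs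
`{ε_i - ε_l, ε_i + ε_l}`, `i < l ≤ n`, are pairwise distinct, so there are `n - i` of them.
-/

/-- The standard basis vector `ε_i` of `ℝ^n` (indices are 1-based, ambient type `ℕ → ℝ`). -/
noncomputable def eps (i : ℕ) : ℕ → ℝ := fun k => if k = i then 1 else 0

/-- The standard inner product on vectors supported on indices `0, …, n`. -/
noncomputable def ip (n : ℕ) (x y : ℕ → ℝ) : ℝ := ∑ k ∈ Finset.range (n + 1), x k * y k

/-- Positive roots of `B_n`: `ε_i ± ε_j` for `1 ≤ i < j ≤ n` and `ε_i` for `1 ≤ i ≤ n`. -/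
def PosB (n : ℕ) : Set (ℕ → ℝ) :=
  {v | ∃ i j : ℕ, 1 ≤ i ∧ i < j ∧ j ≤ n ∧ (v = eps i - eps j ∨ v = eps i + eps j)} ∪
  {v | ∃ i : ℕ, 1 ≤ i ∧ i ≤ n ∧ v = eps i}

/-- Positive roots of `C_n`: `ε_i ± ε_j` for `1 ≤ i < j ≤ n` and `2ε_i` for `1 ≤ i ≤ n`. -/
def PosC (n : ℕ) : Set (ℕ → ℝ) :=
  {v | ∃ i j : ℕ, 1 ≤ i ∧ i < j ∧ j ≤ n ∧ (v = eps i - eps j ∨ v = eps i + eps j)} ∪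
  {v | ∃ i : ℕ, 1 ≤ i ∧ i ≤ n ∧ v = (2 : ℝ) • eps i}

/-- Positive roots of `D_n`: `ε_i ± ε_j` for `1 ≤ i < j ≤ n`. -/
def PosD (n : ℕ) : Set (ℕ → ℝ) :=
  {v | ∃ i j : ℕ, 1 ≤ i ∧ i < j ∧ j ≤ n ∧ (v = eps i - eps j ∨ v = eps i + eps j)}

/-- The reflection `r_a(x) = x - (2(x,a)/(a,a)) a`. -/
noncomputable def rfl' (n : ℕ) (a : ℕ → ℝ) : Function.End (ℕ → ℝ) :=
  fun x => x - (2 * ip n x a / ip n a a) • a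

lemma eps_injective : Function.Injective eps := by
  intro a b h
  simpa [eps] using congrFun h a

lemma eps_add_eps_ne_zero (a b : ℕ) : eps a + eps b ≠ 0 := by
  intro h
  have ha := congrFun h a
  simp only [Pi.add_apply, Pi.zero_apply, eps] at ha
  grind

section CoordinateChecks

variable {a b c d i : ℕ}

lemma eps_sub_eps_add_eps_sub_eps_ne (hab : a < b) :
    eps a - eps b + (eps c - eps d) ≠ (2 : ℝ) • eps i := by
  intro h
  have hi := congrFun h i
  have hb := congrFun h b
  simp only [Pi.add_apply, Pi.sub_apply, Pi.smul_apply, smul_eq_mul, eps] at hi hb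
  grind

lemma eps_add_eps_add_eps_add_eps_ne (hab : a < b) (hcd : c < d) :
    eps a + eps b + (eps c + eps d) ≠ (2 : ℝ) • eps i := by
  intro h
  have ha := congrFun h a
  have hb := congrFun h b
  simp only [Pi.add_apply, Pi.smul_apply, smul_eq_mul, eps] at ha hb
  grind

lemma two_smul_eps_add_ne {n : ℕ} {γ : ℕ → ℝ} (hγ : γ ∈ PosC n) :
    (2 : ℝ) • eps a + γ ≠ (2 : ℝ) • eps i := by
  intro h
  rcases hγ with ⟨c, d, -, hcd, -, rfl | rfl⟩ | ⟨c, -, -, rfl⟩ <;>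
  · have ha := congrFun h a
    have hc := congrFun h c
    simp only [Pi.add_apply, Pi.sub_apply, Pi.smul_apply, smul_eq_mul, eps] at ha hc
    grind

lemma eq_of_eps_sub_eps_add_eps_add_eps_eq (hab : a < b) (hcd : c < d)
    (h : eps a - eps b + (eps c + eps d) = (2 : ℝ) • eps i) : a = i ∧ c = i ∧ b = d := by
  have ha := congrFun h a
  have hb := congrFun h b
  have hc := congrFun h c
  simp only [Pi.add_apply, Pi.sub_apply, Pi.smul_apply, smul_eq_mul, eps] at ha hb hc
  grind

end CoordinateChecks

lemma eps_sub_eps_mem_posC {n a b : ℕ} (ha : 1 ≤ a) (hab : a < b) (hb : b ≤ n) :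
    eps a - eps b ∈ PosC n :=
  Or.inl ⟨a, b, ha, hab, hb, Or.inl rfl⟩

lemma eps_add_eps_mem_posC {n a b : ℕ} (ha : 1 ≤ a) (hab : a < b) (hb : b ≤ n) :
    eps a + eps b ∈ PosC n :=
  Or.inl ⟨a, b, ha, hab, hb, Or.inr rfl⟩

lemma eps_sub_eps_add_eps_add_eps (i l : ℕ) :
    eps i - eps l + (eps i + eps l) = (2 : ℝ) • eps i := by
  rw [two_smul]; abel

lemma eq_eps_add_eps_of_eps_sub_eps_add_eq {n a b i : ℕ} {γ : ℕ → ℝ}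
    (ha : 1 ≤ a) (hab : a < b) (hb : b ≤ n) (hγ : γ ∈ PosC n)
    (h : eps a - eps b + γ = (2 : ℝ) • eps i) : a = i ∧ γ = eps i + eps b := by
  rcases hγ with ⟨c, d, -, hcd, -, rfl | rfl⟩ | ⟨c, -, -, rfl⟩
  · exact absurd h (eps_sub_eps_add_eps_sub_eps_ne hab)
  · obtain ⟨rfl, rfl, rfl⟩ := eq_of_eps_sub_eps_add_eps_add_eps_eq hab hcd h
    exact ⟨rfl, rfl⟩
  · rw [add_comm] at h
    exact absurd h (two_smul_eps_add_ne (eps_sub_eps_mem_posC ha hab hb))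

lemma exists_pair_eq_of_add_eq_two_smul_eps {n i : ℕ} {α γ : ℕ → ℝ}
    (hα : α ∈ PosC n) (hγ : γ ∈ PosC n) (h : α + γ = (2 : ℝ) • eps i) :
    ∃ l, i < l ∧ l ≤ n ∧ s(α, γ) = s(eps i - eps l, eps i + eps l) := by
  rcases hα with ⟨a, b, ha, hab, hb, rfl | rfl⟩ | ⟨a, -, -, rfl⟩
  · obtain ⟨rfl, rfl⟩ := eq_eps_add_eps_of_eps_sub_eps_add_eq ha hab hb hγ h
    exact ⟨b, hab, hb, rfl⟩
  · rcases hγ with ⟨c, d, hc, hcd, hd, rfl | rfl⟩ | ⟨c, -, -, rfl⟩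
    · rw [add_comm] at h
      obtain ⟨rfl, h⟩ := eq_eps_add_eps_of_eps_sub_eps_add_eq hc hcd hd
        (eps_add_eps_mem_posC ha hab hb) h
      exact ⟨d, hcd, hd, by rw [h, Sym2.eq_swap]⟩
    · exact absurd h (eps_add_eps_add_eps_add_eps_ne hab hcd)
    · rw [add_comm] at h
      exact absurd h (two_smul_eps_add_ne (eps_add_eps_mem_posC ha hab hb))
  · exact absurd h (two_smul_eps_add_ne hγ)

lemma injective_pair_eps_sub_eps_eps_add_eps (i : ℕ) :
    Function.Injective fun l => s(eps i - eps l, eps i + eps l) := by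
  intro l l' h
  rcases Sym2.eq_iff.mp h with ⟨h, -⟩ | ⟨h, -⟩
  · exact eps_injective (sub_right_injective h)
  · exact absurd (by linear_combination -h) (eps_add_eps_ne_zero l l')

lemma ncard_setOf_pair_eps_sub_eps_eps_add_eps (i n : ℕ) :
    {p : Sym2 (ℕ → ℝ) | ∃ l : ℕ, i < l ∧ l ≤ n ∧ p = s(eps i - eps l, eps i + eps l)}.ncard
      = n - i := by
  have himage : {p : Sym2 (ℕ → ℝ) | ∃ l : ℕ, i < l ∧ l ≤ n ∧ p = s(eps i - eps l, eps i + eps l)}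
      = (fun l => s(eps i - eps l, eps i + eps l)) '' Set.Ioc i n := by
    ext p
    simp [eq_comm, and_assoc]
  rw [himage, Set.ncard_image_of_injective _ (injective_pair_eps_sub_eps_eps_add_eps i),
    ← Finset.coe_Ioc, Set.ncard_coe_finset, Nat.card_Ioc]

theorem stmt3_general (n i : ℕ) (hi : 1 ≤ i) :
    {p : Sym2 (ℕ → ℝ) | ∃ α γ : ℕ → ℝ,
        p = s(α, γ) ∧ α ∈ PosC n ∧ γ ∈ PosC n ∧ α + γ = (2 : ℝ) • eps i}
      = {p : Sym2 (ℕ → ℝ) | ∃ l : ℕ, i < l ∧ l ≤ n ∧ p = s(eps i - eps l, eps i + eps l)} ∧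
    Set.ncard {p : Sym2 (ℕ → ℝ) | ∃ α γ : ℕ → ℝ,
        p = s(α, γ) ∧ α ∈ PosC n ∧ γ ∈ PosC n ∧ α + γ = (2 : ℝ) • eps i} = n - i := by
  have hpairs : {p : Sym2 (ℕ → ℝ) | ∃ α γ : ℕ → ℝ,
        p = s(α, γ) ∧ α ∈ PosC n ∧ γ ∈ PosC n ∧ α + γ = (2 : ℝ) • eps i}
      = {p : Sym2 (ℕ → ℝ) | ∃ l : ℕ, i < l ∧ l ≤ n ∧ p = s(eps i - eps l, eps i + eps l)} := by
    ext p
    constructor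
    · rintro ⟨α, γ, rfl, hα, hγ, h⟩
      exact exists_pair_eq_of_add_eq_two_smul_eps hα hγ h
    · rintro ⟨l, hil, hl, rfl⟩
      exact ⟨_, _, rfl, eps_sub_eps_mem_posC hi hil hl, eps_add_eps_mem_posC hi hil hl,
        eps_sub_eps_add_eps_add_eps i l⟩
  exact ⟨hpairs, hpairs ▸ ncard_setOf_pair_eps_sub_eps_eps_add_eps i n⟩

/-- In `C_n`, the unordered pairs of positive roots summing to `2ε_i` are exactly the pairs
`{ε_i - ε_l, ε_i + ε_l}` for `i < l ≤ n`; in particular there are exactly `n - i` of them. -/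
theorem stmt3 (n i : ℕ) (hi : 1 ≤ i) (hn : i ≤ n) :
    {p : Sym2 (ℕ → ℝ) | ∃ α γ : ℕ → ℝ,
        p = s(α, γ) ∧ α ∈ PosC n ∧ γ ∈ PosC n ∧ α + γ = (2 : ℝ) • eps i}
      = {p : Sym2 (ℕ → ℝ) | ∃ l : ℕ, i < l ∧ l ≤ n ∧ p = s(eps i - eps l, eps i + eps l)} ∧
    Set.ncard {p : Sym2 (ℕ → ℝ) | ∃ α γ : ℕ → ℝ,
        p = s(α, γ) ∧ α ∈ PosC n ∧ γ ∈ PosC n ∧ α + γ = (2 : ℝ) • eps i} = n - i :=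
  stmt3_general n i hi
end

section
/- In the Weyl group of B_n, C_n, or D_n, for a positive root α of the form ε_i − ε_j or ε_i + ε_j (with i < j, Φ = B_n or D_n), the set of positive roots sent to negative roots by the reflection r_α equals S(α) ∪ {α}, where S(α) is the set of positive roots γ such that α − γ is also a positive root. Consequently the length of r_α equals |S(α)| + 1. -/
/-!
Write `α = ε_i + t ε_j` with `t = ±1`. Then `(α, α) = 2`, so `r_α β = β - (β, α) α`, and since the
coordinates of a positive root of `B_n` lie in `{-1, 0, 1}`, the pairing `(β, α) = β_i + t β_j` is
either `≤ 0`, or `1`, or `2`, the last only for `β = α`.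

If `-r_α β = (β, α) α - β` is a positive root, pairing with the regular weight
`ρ = ∑ (n + 1 - k) ε_k`, which is positive on all positive roots, forces `(β, α) > 0`; so either
`β = α` or `(β, α) = 1` and `-r_α β = α - β`. Conversely, if `β` and `α - β` are positive roots then
neither equals `α` (as `0` is not a root), so both pairings with `α` are `≤ 1`; they sum to
`(α, α) = 2`, hence `(β, α) = 1`.
-/

section InnerProduct

variable {n : ℕ}

lemma ip_comm (x y : ℕ → ℝ) : ip n x y = ip n y x := by
  simp only [ip, mul_comm]

lemma ip_add_left (x y z : ℕ → ℝ) : ip n (x + y) z = ip n x z + ip n y z := by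
  simp only [ip, Pi.add_apply, add_mul, Finset.sum_add_distrib]

lemma ip_sub_left (x y z : ℕ → ℝ) : ip n (x - y) z = ip n x z - ip n y z := by
  simp only [ip, Pi.sub_apply, sub_mul, Finset.sum_sub_distrib]

lemma ip_smul_left (c : ℝ) (x y : ℕ → ℝ) : ip n (c • x) y = c * ip n x y := by
  simp only [ip, Pi.smul_apply, smul_eq_mul, Finset.mul_sum, mul_assoc]

lemma ip_eps_left {a : ℕ} (ha : a ≤ n) (y : ℕ → ℝ) : ip n (eps a) y = y a := by
  rw [ip, Finset.sum_eq_single_of_mem a (Finset.mem_range.mpr (Nat.lt_succ_of_le ha))]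
  · simp [eps]
  · intro k _ hk
    simp [eps, hk]

lemma ip_eps_add_smul_eps {i j : ℕ} (hi : i ≤ n) (hj : j ≤ n) (t : ℝ) (v : ℕ → ℝ) :
    ip n v (eps i + t • eps j) = v i + t * v j := by
  rw [ip_comm, ip_add_left, ip_smul_left, ip_eps_left hi, ip_eps_left hj]

end InnerProduct

lemma rfl'_apply_of_ip_self_eq_two {n : ℕ} {a : ℕ → ℝ} (ha : ip n a a = 2) (x : ℕ → ℝ) :
    rfl' n a x = x - ip n x a • a := by
  show x - (2 * ip n x a / ip n a a) • a = _
  rw [ha, mul_div_cancel_left₀ _ two_ne_zero]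

section PosB

variable {n : ℕ}

lemma PosD_subset_PosB : PosD n ⊆ PosB n := Set.subset_union_left

lemma PosB_finite : (PosB n).Finite := by
  have hpairs := (Set.finite_Iic n).prod (Set.finite_Iic n)
  refine (((hpairs.image fun p => eps p.1 - eps p.2).union
    (hpairs.image fun p => eps p.1 + eps p.2)).union ((Set.finite_Iic n).image eps)).subset ?_
  rintro v (⟨a, b, -, hab, hb, rfl | rfl⟩ | ⟨a, -, ha, rfl⟩)
  · exact Or.inl (Or.inl ⟨(a, b), ⟨hab.le.trans hb, hb⟩, rfl⟩)
  · exact Or.inl (Or.inr ⟨(a, b), ⟨hab.le.trans hb, hb⟩, rfl⟩)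
  · exact Or.inr ⟨a, ha, rfl⟩

lemma apply_mem_of_mem_PosB {v : ℕ → ℝ} (hv : v ∈ PosB n) (k : ℕ) :
    v k = -1 ∨ v k = 0 ∨ v k = 1 := by
  rcases hv with ⟨a, b, -, hab, -, rfl | rfl⟩ | ⟨a, -, -, rfl⟩ <;>
    simp only [eps, Pi.sub_apply, Pi.add_apply] <;> split_ifs <;> first | omega | norm_num

noncomputable def heightWeight (n : ℕ) : ℕ → ℝ := fun k => (n : ℝ) + 1 - k

lemma ip_heightWeight_pos_of_mem_PosB {v : ℕ → ℝ} (hv : v ∈ PosB n) :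
    0 < ip n v (heightWeight n) := by
  rcases hv with ⟨a, b, -, hab, hb, rfl | rfl⟩ | ⟨a, -, ha, rfl⟩
  · have : (a : ℝ) < b := by exact_mod_cast hab
    rw [ip_sub_left, ip_eps_left (hab.le.trans hb), ip_eps_left hb]
    simp only [heightWeight]
    linarith
  · have : (a : ℝ) < b := by exact_mod_cast hab
    have : (b : ℝ) ≤ n := by exact_mod_cast hb
    rw [ip_add_left, ip_eps_left (hab.le.trans hb), ip_eps_left hb]
    simp only [heightWeight]
    linarith
  · have : (a : ℝ) ≤ n := by exact_mod_cast ha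
    rw [ip_eps_left ha]
    simp only [heightWeight]
    linarith

lemma zero_notMem_PosB : (0 : ℕ → ℝ) ∉ PosB n := fun h => by
  simpa [ip] using ip_heightWeight_pos_of_mem_PosB h

lemma pos_of_smul_sub_mem_PosB {α β : ℕ → ℝ} {c : ℝ} (hα : α ∈ PosB n) (hβ : β ∈ PosB n)
    (h : c • α - β ∈ PosB n) : 0 < c := by
  have hα' := ip_heightWeight_pos_of_mem_PosB hα
  have hβ' := ip_heightWeight_pos_of_mem_PosB hβ
  have h' := ip_heightWeight_pos_of_mem_PosB h
  rw [ip_sub_left, ip_smul_left] at h'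
  exact pos_of_mul_pos_left (by linarith) hα'.le

lemma eq_eps_add_smul_eps_of_mem_PosB {i j : ℕ} (hij : i ≠ j) {t : ℝ} (ht : t = 1 ∨ t = -1)
    {β : ℕ → ℝ} (hβ : β ∈ PosB n) (hβi : β i = 1) (hβj : β j = t) :
    β = eps i + t • eps j := by
  rcases ht with rfl | rfl <;>
  rcases hβ with ⟨a, b, -, hab, -, rfl | rfl⟩ | ⟨a, -, -, rfl⟩ <;>
  simp only [eps, Pi.sub_apply, Pi.add_apply] at hβi hβj <;>
  split_ifs at hβi hβj <;>
  first
    | omega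
    | linarith
    | (funext k
       simp only [eps, Pi.sub_apply, Pi.add_apply, Pi.smul_apply, smul_eq_mul]
       split_ifs <;> first | omega | norm_num)

end PosB

section LongRoot

variable {n i j : ℕ} {t : ℝ}

lemma ip_self_eps_add_smul_eps (hij : i ≠ j) (hi : i ≤ n) (hj : j ≤ n) (ht : t = 1 ∨ t = -1) :
    ip n (eps i + t • eps j) (eps i + t • eps j) = 2 := by
  rw [ip_eps_add_smul_eps hi hj]
  rcases ht with rfl | rfl <;> norm_num [eps, hij, hij.symm]

lemma ip_eps_add_smul_eps_le_zero_or_eq_one_or_eq (hij : i ≠ j) (hi : i ≤ n) (hj : j ≤ n)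
    (ht : t = 1 ∨ t = -1) {β : ℕ → ℝ} (hβ : β ∈ PosB n) :
    ip n β (eps i + t • eps j) ≤ 0 ∨ ip n β (eps i + t • eps j) = 1 ∨ β = eps i + t • eps j := by
  rw [ip_eps_add_smul_eps hi hj]
  by_cases hα : β i = 1 ∧ β j = t
  · exact Or.inr (Or.inr (eq_eps_add_smul_eps_of_mem_PosB hij ht hβ hα.1 hα.2))
  · rcases apply_mem_of_mem_PosB hβ i with h1 | h1 | h1 <;>
    rcases apply_mem_of_mem_PosB hβ j with h2 | h2 | h2 <;>
    rcases ht with rfl | rfl <;> rw [h1, h2] at hα ⊢ <;>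
    first | exact absurd ⟨rfl, rfl⟩ hα | norm_num

theorem inversionSet_eq (hij : i ≠ j) (hi : i ≤ n) (hj : j ≤ n) (ht : t = 1 ∨ t = -1)
    {Pos : Set (ℕ → ℝ)} (hPos : Pos ⊆ PosB n) {α : ℕ → ℝ} (hα : α = eps i + t • eps j)
    (hαPos : α ∈ Pos) :
    {β ∈ Pos | -(rfl' n α β) ∈ Pos} = {γ ∈ Pos | α - γ ∈ Pos} ∪ {α} := by
  have hαα : ip n α α = 2 := hα ▸ ip_self_eps_add_smul_eps hij hi hj ht
  have hcases : ∀ β ∈ Pos, ip n β α ≤ 0 ∨ ip n β α = 1 ∨ β = α := fun β hβ =>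
    hα ▸ ip_eps_add_smul_eps_le_zero_or_eq_one_or_eq hij hi hj ht (hPos hβ)
  have hzero : (0 : ℕ → ℝ) ∉ Pos := fun h => zero_notMem_PosB (hPos h)
  ext β
  simp only [Set.mem_union, Set.mem_singleton_iff, Set.mem_sep_iff,
    rfl'_apply_of_ip_self_eq_two hαα, neg_sub]
  constructor
  · rintro ⟨hβ, hγ⟩
    have hpos : 0 < ip n β α := pos_of_smul_sub_mem_PosB (hPos hαPos) (hPos hβ) (hPos hγ)
    rcases hcases β hβ with h | h | h
    · exact absurd h hpos.not_ge
    · rw [h, one_smul] at hγ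
      exact Or.inl ⟨hβ, hγ⟩
    · exact Or.inr h
  · rintro (⟨hβ, hγ⟩ | rfl)
    · have hβα : ip n β α ≤ 1 := by
        rcases hcases β hβ with h | h | rfl
        · linarith
        · exact h.le
        · exact absurd (sub_self β ▸ hγ) hzero
      have hγα : ip n (α - β) α ≤ 1 := by
        rcases hcases (α - β) hγ with h | h | h
        · linarith
        · exact h.le
        · exact absurd (sub_eq_self.mp h ▸ hβ) hzero
      rw [ip_sub_left, hαα] at hγα
      rw [le_antisymm hβα (by linarith), one_smul]
      exact ⟨hβ, hγ⟩
    · rw [hαα, two_smul, add_sub_cancel_right]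
      exact ⟨hαPos, hαPos⟩

end LongRoot

lemma ncard_sep_union_singleton {n : ℕ} {Pos : Set (ℕ → ℝ)} (hPos : Pos ⊆ PosB n)
    (α : ℕ → ℝ) :
    Set.ncard ({γ ∈ Pos | α - γ ∈ Pos} ∪ {α}) = Set.ncard {γ ∈ Pos | α - γ ∈ Pos} + 1 := by
  have hα : α ∉ {γ ∈ Pos | α - γ ∈ Pos} := fun h =>
    zero_notMem_PosB (hPos (sub_self α ▸ h.2))
  rw [Set.ncard_union_eq (Set.disjoint_singleton_right.mpr hα)
    ((PosB_finite.subset hPos).subset (Set.sep_subset _ _)) (Set.finite_singleton α),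
    Set.ncard_singleton]

/-- For `Φ ∈ {B_n, D_n}` and a long positive root `α = ε_i ± ε_j` (`i < j`), the set of positive
roots sent to negative roots by the reflection `r_α` is `S(α) ∪ {α}`, where
`S(α) = {γ ∈ Φ⁺ | α - γ ∈ Φ⁺}`; consequently `l(r_α) = |S(α)| + 1`. -/
theorem stmt5 (n i j : ℕ) (hi : 1 ≤ i) (hij : i < j) (hj : j ≤ n)
    (Pos : Set (ℕ → ℝ)) (hPos : Pos = PosB n ∨ Pos = PosD n)
    (α : ℕ → ℝ) (hα : α = eps i - eps j ∨ α = eps i + eps j) :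
    {β ∈ Pos | -(rfl' n α β) ∈ Pos} = {γ ∈ Pos | α - γ ∈ Pos} ∪ {α} ∧
    Set.ncard {β ∈ Pos | -(rfl' n α β) ∈ Pos} = Set.ncard {γ ∈ Pos | α - γ ∈ Pos} + 1 := by
  have hPosB : Pos ⊆ PosB n := by
    rcases hPos with rfl | rfl
    exacts [subset_rfl, PosD_subset_PosB]
  have hαPos : α ∈ Pos := by
    have hαD : α ∈ PosD n := ⟨i, j, hi, hij, hj, hα⟩
    rcases hPos with rfl | rfl
    exacts [PosD_subset_PosB hαD, hαD]
  obtain ⟨t, ht, hαt⟩ : ∃ t : ℝ, (t = 1 ∨ t = -1) ∧ α = eps i + t • eps j := by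
    rcases hα with rfl | rfl
    · exact ⟨-1, Or.inr rfl, by rw [neg_one_smul, sub_eq_add_neg]⟩
    · exact ⟨1, Or.inl rfl, by rw [one_smul]⟩
  have hinv := inversionSet_eq hij.ne (hij.le.trans hj) hj ht hPosB hαt hαPos
  exact ⟨hinv, hinv ▸ ncard_sep_union_singleton hPosB α⟩
end

section
/- Let D = {β_1, …, β_t, β} where β_j = ε_{2j−1} + ε_{2j} and β ∈ C_{2t+1} (the (2t+1)-th column of positive roots) in Φ ∈ {B_n, C_n, D_n}, an orthogonal subset. Then the sets Φ_{r_{β_1}}, …, Φ_{r_{β_t}}, Φ_{r_β} of positive roots sent negative by the individual reflections are pairwise disjoint, and Φ_σ for σ = r_{β_1}⋯r_{β_t} r_β equals their union; hence l(σ) = Σ_j l(r_{β_j}) + l(r_β). -/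
/-- The root `β_j = ε_{2j-1} + ε_{2j}`. -/
noncomputable def Bv (j : ℕ) : ℕ → ℝ := eps (2 * j - 1) + eps (2 * j)

/-- The set `Φ_w = {α ∈ Φ⁺ | w(α) ∈ -Φ⁺}` of positive roots sent negative by `w`. -/
def PhiSet (Pos : Set (ℕ → ℝ)) (w : Function.End (ℕ → ℝ)) : Set (ℕ → ℝ) :=
  {α ∈ Pos | -(w α) ∈ Pos}

/-!
Every reflection in a root of `B_n`, `C_n` or `D_n` permutes the coordinates `1, …, n` up to
sign, so it maps positive roots to roots, and a root is negative exactly when its coordinate in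
its own column is. A reflection `r_γ` does not touch the coordinates before `col γ`; hence
`Φ_{r_{β_j}}` consists of positive roots in columns `2j - 1`, `2j`, and `Φ_{r_β}` of positive
roots in columns `≥ 2t + 1`, which gives the disjointness. For `α` in a column `≥ 2t + 1`, the
vector `r_β α` vanishes on the first `2t` coordinates, so `σ α = r_β α`. For `α` in column
`2j - 1` or `2j`, the vectors `σ α` and `r_{β_j} α` agree on the first `2j` coordinates, one of
which is nonzero, so they have the same sign.
-/

open Set

namespace BCDRoots

/-- The column of `v` in the paper's sense: the index of its first nonzero coordinate. -/
noncomputable def col (v : ℕ → ℝ) : ℕ := sInf {k | v k ≠ 0}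

lemma apply_eq_zero_of_lt_col {v : ℕ → ℝ} {k : ℕ} (hk : k < col v) : v k = 0 :=
  not_not.1 (Nat.notMem_of_lt_sInf hk)

lemma eq_zero_of_lt_of_col_eq {v : ℕ → ℝ} {k c : ℕ} (hcol : col v = c) (hk : k < c) : v k = 0 :=
  apply_eq_zero_of_lt_col (hcol ▸ hk)

lemma col_le {v : ℕ → ℝ} {i : ℕ} (hi : v i ≠ 0) : col v ≤ i := Nat.sInf_le hi

lemma apply_col_ne_zero {v : ℕ → ℝ} {i : ℕ} (hi : v i ≠ 0) : v (col v) ≠ 0 :=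
  Nat.sInf_mem (s := {k | v k ≠ 0}) ⟨i, hi⟩

lemma col_eq {v : ℕ → ℝ} {i : ℕ} (hi : v i ≠ 0) (hlt : ∀ k < i, v k = 0) : col v = i :=
  le_antisymm (col_le hi) (not_lt.1 fun h => apply_col_ne_zero hi (hlt _ h))

lemma col_neg (v : ℕ → ℝ) : col (-v) = col v := by simp [col]

lemma col_eq_of_agree {x y : ℕ → ℝ} {m i : ℕ} (hxy : ∀ k ≤ m, x k = y k) (hi : i ≤ m)
    (hxi : x i ≠ 0) : col x = col y := by
  have hx : col x ≤ m := (col_le hxi).trans hi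
  have hy : y (col x) ≠ 0 := hxy _ hx ▸ apply_col_ne_zero hxi
  have hym : col y ≤ m := (col_le hy).trans hx
  exact le_antisymm (col_le (hxy _ hym ▸ apply_col_ne_zero hy)) (col_le hy)

section Reflections

variable {n : ℕ}

lemma ip_eps_right (x : ℕ → ℝ) {i : ℕ} (hi : i ≤ n) : ip n x (eps i) = x i := by
  simp [ip, eps, hi]

lemma ip_add_right (x a b : ℕ → ℝ) : ip n x (a + b) = ip n x a + ip n x b := by
  simp [ip, mul_add, Finset.sum_add_distrib]

lemma ip_smul_right (x a : ℕ → ℝ) (c : ℝ) : ip n x (c • a) = c * ip n x a := by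
  simp [ip, Finset.mul_sum, mul_left_comm]

lemma rfl'_apply_of_eq_zero {γ : ℕ → ℝ} {m : ℕ} (hγ : γ m = 0) (x : ℕ → ℝ) :
    rfl' n γ x m = x m := by
  simp [rfl', hγ]

lemma rfl'_pair_apply {p q : ℕ} {e : ℝ} (hpq : p ≠ q) (hp : p ≤ n) (hq : q ≤ n)
    (he : e = 1 ∨ e = -1) (x : ℕ → ℝ) (m : ℕ) :
    rfl' n (eps p + e • eps q) x m =
      if m = p then -e * x q else if m = q then -e * x p else x m := by
  have hip : ∀ y, ip n y (eps p + e • eps q) = y p + e * y q := fun y => by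
    rw [ip_add_right, ip_smul_right, ip_eps_right _ hp, ip_eps_right _ hq]
  simp only [rfl', hip, Pi.sub_apply, Pi.smul_apply, Pi.add_apply, smul_eq_mul, eps]
  rcases he with rfl | rfl <;> split_ifs <;> simp_all <;> ring

lemma rfl'_single_apply {p : ℕ} {c : ℝ} (hc : c ≠ 0) (hp : p ≤ n) (x : ℕ → ℝ) (m : ℕ) :
    rfl' n (c • eps p) x m = if m = p then -x m else x m := by
  have hip : ∀ y, ip n y (c • eps p) = c * y p := fun y => by
    rw [ip_smul_right, ip_eps_right _ hp]
  by_cases h : m = p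
  · subst h
    simp only [rfl', hip, Pi.sub_apply, Pi.smul_apply, smul_eq_mul, eps, if_pos, mul_one]
    field_simp
    ring
  · simp [rfl', hip, eps, h]

def IsSignedPerm (n : ℕ) (f : Function.End (ℕ → ℝ)) : Prop :=
  ∃ (π : Equiv.Perm ℕ) (s : ℕ → ℝ), (∀ m, s m = 1 ∨ s m = -1) ∧
    (∀ m, (1 ≤ π m ∧ π m ≤ n) ↔ (1 ≤ m ∧ m ≤ n)) ∧ ∀ x m, f x m = s m * x (π m)

variable (n) in
def signedPerms : Submonoid (Function.End (ℕ → ℝ)) where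
  carrier := {f | IsSignedPerm n f}
  one_mem' := ⟨1, fun _ => 1, by simp, by simp, by simp [Function.End.one_def]⟩
  mul_mem' := by
    rintro f g ⟨π, s, hs, hπ, hf⟩ ⟨π', s', hs', hπ', hg⟩
    refine ⟨π.trans π', fun m => s m * s' (π m), fun m => ?_, fun m => (hπ' _).trans (hπ m),
      fun x m => ?_⟩
    · rcases hs m with h | h <;> rcases hs' (π m) with h' | h' <;> simp [h, h']
    · change f (g x) m = _
      rw [hf, hg, Equiv.trans_apply, mul_assoc]

lemma isSignedPerm_rfl'_pair {p q : ℕ} {e : ℝ} (hpq : p ≠ q) (hp1 : 1 ≤ p) (hp : p ≤ n)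
    (hq1 : 1 ≤ q) (hq : q ≤ n) (he : e = 1 ∨ e = -1) :
    IsSignedPerm n (rfl' n (eps p + e • eps q)) := by
  refine ⟨Equiv.swap p q, fun m => if m = p ∨ m = q then -e else 1, fun m => ?_, fun m => ?_,
    fun x m => ?_⟩
  · dsimp only
    split_ifs
    · rcases he with rfl | rfl <;> simp
    · simp
  · rw [Equiv.swap_apply_def]; split_ifs <;> omega
  · rw [rfl'_pair_apply hpq hp hq he, Equiv.swap_apply_def]
    split_ifs <;> simp_all

lemma isSignedPerm_rfl'_single {p : ℕ} {c : ℝ} (hc : c ≠ 0) (hp : p ≤ n) :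
    IsSignedPerm n (rfl' n (c • eps p)) := by
  refine ⟨1, fun m => if m = p then -1 else 1, fun m => ?_, fun m => Iff.rfl, fun x m => ?_⟩
  · dsimp only
    split_ifs <;> simp
  · rw [rfl'_single_apply hc hp]
    split_ifs <;> simp_all

end Reflections

section PositiveRoots

variable {n : ℕ} {Pos : Set (ℕ → ℝ)} (hPos : Pos = PosB n ∨ Pos = PosC n ∨ Pos = PosD n)
include hPos

lemma eq_pair_or_eq_single_of_mem {v : ℕ → ℝ} (hv : v ∈ Pos) :
    (∃ i k : ℕ, ∃ e : ℝ, 1 ≤ i ∧ i < k ∧ k ≤ n ∧ (e = 1 ∨ e = -1) ∧ v = eps i + e • eps k) ∨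
    (∃ c : ℝ, ∃ i : ℕ, (c = 1 ∨ c = 2) ∧ 1 ≤ i ∧ i ≤ n ∧ v = c • eps i ∧
      ∀ m, 1 ≤ m → m ≤ n → c • eps m ∈ Pos) := by
  have pair : ∀ i k, 1 ≤ i → i < k → k ≤ n → (v = eps i - eps k ∨ v = eps i + eps k) →
      ∃ i k : ℕ, ∃ e : ℝ, 1 ≤ i ∧ i < k ∧ k ≤ n ∧ (e = 1 ∨ e = -1) ∧ v = eps i + e • eps k := by
    rintro i k h1 h2 h3 (rfl | rfl)
    · exact ⟨i, k, -1, h1, h2, h3, Or.inr rfl, by module⟩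
    · exact ⟨i, k, 1, h1, h2, h3, Or.inl rfl, by module⟩
  rcases hPos with rfl | rfl | rfl
  · rcases hv with ⟨i, k, h1, h2, h3, h⟩ | ⟨i, h1, h2, rfl⟩
    · exact Or.inl (pair i k h1 h2 h3 h)
    · exact Or.inr ⟨1, i, Or.inl rfl, h1, h2, (one_smul _ _).symm,
        fun m hm1 hm2 => Or.inr ⟨m, hm1, hm2, one_smul _ _⟩⟩
  · rcases hv with ⟨i, k, h1, h2, h3, h⟩ | ⟨i, h1, h2, rfl⟩
    · exact Or.inl (pair i k h1 h2 h3 h)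
    · exact Or.inr ⟨2, i, Or.inr rfl, h1, h2, rfl, fun m hm1 hm2 => Or.inr ⟨m, hm1, hm2, rfl⟩⟩
  · obtain ⟨i, k, h1, h2, h3, h⟩ := hv
    exact Or.inl (pair i k h1 h2 h3 h)

lemma eps_add_smul_eps_mem {i k : ℕ} {e : ℝ} (h1 : 1 ≤ i) (h2 : i < k) (h3 : k ≤ n)
    (he : e = 1 ∨ e = -1) : eps i + e • eps k ∈ Pos := by
  have hv : eps i + e • eps k = eps i - eps k ∨ eps i + e • eps k = eps i + eps k := by
    rcases he with rfl | rfl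
    · exact Or.inr (by module)
    · exact Or.inl (by module)
  rcases hPos with rfl | rfl | rfl
  exacts [Or.inl ⟨i, k, h1, h2, h3, hv⟩, Or.inl ⟨i, k, h1, h2, h3, hv⟩, ⟨i, k, h1, h2, h3, hv⟩]

lemma finite_pos : Pos.Finite := by
  refine ((((finite_Iic n).prod (finite_Iic n)).prod (Set.toFinite {-1, 0, 1})).image
    fun p : (ℕ × ℕ) × ℝ => eps p.1.1 + p.2 • eps p.1.2).subset ?_
  intro v hv
  rcases eq_pair_or_eq_single_of_mem hPos hv with
    ⟨i, k, e, -, hik, hk, he, rfl⟩ | ⟨c, i, hc, -, hi, rfl, -⟩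
  · refine ⟨((i, k), e), ⟨⟨by simpa using by omega, by simpa using hk⟩, ?_⟩, rfl⟩
    rcases he with rfl | rfl <;> simp
  · refine ⟨((i, i), c - 1), ⟨⟨by simpa using hi, by simpa using hi⟩, ?_⟩, by dsimp only; module⟩
    rcases hc with rfl | rfl <;> norm_num

lemma apply_col_pos_of_mem {v : ℕ → ℝ} (hv : v ∈ Pos) : 0 < v (col v) := by
  rcases eq_pair_or_eq_single_of_mem hPos hv with
    ⟨i, k, e, -, hik, -, -, rfl⟩ | ⟨c, i, hc, -, -, rfl, -⟩
  · have hval : (eps i + e • eps k) i = 1 := by simp [eps, hik.ne]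
    rw [col_eq (hval ▸ one_ne_zero) fun m hm => by simp [eps, hm.ne, (hm.trans hik).ne], hval]
    exact one_pos
  · have hc0 : 0 < c := by rcases hc with rfl | rfl <;> norm_num
    have hval : (c • eps i) i = c := by simp [eps]
    rw [col_eq (hval ▸ hc0.ne') fun m hm => by simp [eps, hm.ne], hval]
    exact hc0

lemma smul_eps_add_smul_eps_mem_roots {a b : ℕ} {s₁ s₂ : ℝ} (hab : a ≠ b) (ha1 : 1 ≤ a)
    (ha : a ≤ n) (hb1 : 1 ≤ b) (hb : b ≤ n) (hs₁ : s₁ = 1 ∨ s₁ = -1) (hs₂ : s₂ = 1 ∨ s₂ = -1) :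
    s₁ • eps a + s₂ • eps b ∈ Pos ∪ -Pos := by
  wlog hlt : a < b generalizing a b s₁ s₂
  · rw [add_comm]
    exact this hab.symm hb1 hb ha1 ha hs₂ hs₁ (by omega)
  rcases hs₁ with rfl | rfl
  · exact Or.inl (by simpa using eps_add_smul_eps_mem hPos ha1 hlt hb hs₂)
  · refine Or.inr (Set.mem_neg.2 ?_)
    have hs₂' : -s₂ = 1 ∨ -s₂ = -1 := by rcases hs₂ with rfl | rfl <;> norm_num
    convert eps_add_smul_eps_mem hPos ha1 hlt hb hs₂' using 1
    module

lemma IsSignedPerm.mapsTo {f : Function.End (ℕ → ℝ)} (hf : IsSignedPerm n f) :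
    MapsTo f Pos (Pos ∪ -Pos) := by
  obtain ⟨π, s, hs, hπ, hf⟩ := hf
  have heps : ∀ a c, f (c • eps a) = (c * s (π.symm a)) • eps (π.symm a) := fun a c => by
    funext m
    rw [hf]
    by_cases h : π m = a
    · subst h
      simp [eps, mul_comm]
    · simp [eps, h, Equiv.eq_symm_apply]
  have hadd : ∀ x y, f (x + y) = f x + f y := fun x y => by
    funext m
    simp [hf, mul_add]
  have hrange : ∀ a, 1 ≤ a → a ≤ n → 1 ≤ π.symm a ∧ π.symm a ≤ n := fun a h1 h2 =>
    (hπ _).1 (by simpa using And.intro h1 h2)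
  have hsign : ∀ a c, c = 1 ∨ c = -1 → c * s a = 1 ∨ c * s a = -1 := fun a c hc => by
    rcases hc with rfl | rfl <;> rcases hs a with h | h <;> simp [h]
  intro v hv
  rcases eq_pair_or_eq_single_of_mem hPos hv with
    ⟨i, k, e, hi1, hik, hk, he, rfl⟩ | ⟨c, i, -, hi1, hi, rfl, hc⟩
  · rw [hadd, ← one_smul ℝ (eps i), heps, heps]
    exact smul_eps_add_smul_eps_mem_roots hPos (π.symm.injective.ne hik.ne)
      (hrange i hi1 (by omega)).1 (hrange i hi1 (by omega)).2 (hrange k (by omega) hk).1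
      (hrange k (by omega) hk).2 (hsign _ _ (Or.inl rfl)) (hsign _ _ he)
  · rw [heps, mul_comm, mul_smul]
    have hmem := hc _ (hrange i hi1 hi).1 (hrange i hi1 hi).2
    rcases hs (π.symm i) with h | h
    · exact Or.inl (by simpa [h] using hmem)
    · exact Or.inr (by simpa [h] using hmem)

lemma isSignedPerm_rfl'_of_mem {γ : ℕ → ℝ} (hγ : γ ∈ Pos) : IsSignedPerm n (rfl' n γ) := by
  rcases eq_pair_or_eq_single_of_mem hPos hγ with
    ⟨i, k, e, hi1, hik, hk, he, rfl⟩ | ⟨c, i, hc, -, hi, rfl, -⟩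
  · exact isSignedPerm_rfl'_pair hik.ne hi1 (by omega) (by omega) hk he
  · exact isSignedPerm_rfl'_single (by rcases hc with rfl | rfl <;> norm_num) hi

lemma one_le_col_of_mem {v : ℕ → ℝ} (hv : v ∈ Pos) : 1 ≤ col v := by
  refine Nat.one_le_iff_ne_zero.2 fun h => (apply_col_pos_of_mem hPos hv).ne' ?_
  rw [h]
  rcases eq_pair_or_eq_single_of_mem hPos hv with
    ⟨i, k, e, hi1, hik, -, -, rfl⟩ | ⟨c, i, -, hi1, -, rfl, -⟩
  · simp [eps, show 0 ≠ i by omega, show 0 ≠ k by omega]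
  · simp [eps, show 0 ≠ i by omega]

lemma neg_mem_iff_apply_col_neg {v : ℕ → ℝ} (hv : v ∈ Pos ∪ -Pos) :
    -v ∈ Pos ↔ v (col v) < 0 := by
  refine ⟨fun h => ?_, fun h => hv.resolve_left fun hv => ?_⟩
  · simpa [col_neg] using apply_col_pos_of_mem hPos h
  · exact (apply_col_pos_of_mem hPos hv).not_gt h

lemma IsSignedPerm.mem_phiSet_iff {f : Function.End (ℕ → ℝ)} (hf : IsSignedPerm n f)
    {α : ℕ → ℝ} : α ∈ PhiSet Pos f ↔ α ∈ Pos ∧ f α (col (f α)) < 0 :=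
  and_congr_right fun hα => neg_mem_iff_apply_col_neg hPos (hf.mapsTo hPos hα)

lemma notMem_phiSet_of_agree {f : Function.End (ℕ → ℝ)} {α : ℕ → ℝ} (hα : α ∈ Pos)
    (hagree : ∀ k ≤ col α, α k = f α k) : α ∉ PhiSet Pos f := by
  rintro ⟨-, hneg⟩
  have hpos := apply_col_pos_of_mem hPos hα
  have hcol : col (-(f α)) = col α := by
    rw [col_neg, col_eq_of_agree hagree le_rfl hpos.ne']
  have := apply_col_pos_of_mem hPos hneg
  rw [hcol, Pi.neg_apply, ← hagree _ le_rfl] at this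
  linarith

lemma le_col_of_mem_phiSet_rfl' {γ α : ℕ → ℝ} {s : ℕ} (hγ : ∀ m < s, γ m = 0)
    (hα : α ∈ PhiSet Pos (rfl' n γ)) : s ≤ col α := by
  by_contra! h
  exact notMem_phiSet_of_agree hPos hα.1
    (fun k hk => (rfl'_apply_of_eq_zero (hγ k (by omega)) α).symm) hα

end PositiveRoots

section PairReflections

variable {n : ℕ}

lemma Bv_eq (j : ℕ) : Bv j = eps (2 * j - 1) + (1 : ℝ) • eps (2 * j) := by
  rw [one_smul]; rfl

lemma rfl'_Bv_apply {j : ℕ} (hj : 1 ≤ j) (hjn : 2 * j ≤ n) (x : ℕ → ℝ) (m : ℕ) :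
    rfl' n (Bv j) x m =
      if m = 2 * j - 1 then -x (2 * j) else if m = 2 * j then -x (2 * j - 1) else x m := by
  rw [Bv_eq, rfl'_pair_apply (by omega) (by omega) hjn (Or.inl rfl)]
  simp

lemma isSignedPerm_rfl'_Bv {j : ℕ} (hj : 1 ≤ j) (hjn : 2 * j ≤ n) :
    IsSignedPerm n (rfl' n (Bv j)) := by
  rw [Bv_eq]
  exact isSignedPerm_rfl'_pair (by omega) (by omega) (by omega) (by omega) hjn (Or.inl rfl)

def partner (m : ℕ) : ℕ := if m % 2 = 1 then m + 1 else m - 1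

lemma partner_le_two_mul {m a : ℕ} (hm : m ≤ 2 * a) : partner m ≤ 2 * a := by
  unfold partner; split_ifs <;> omega

lemma rfl'_Bv_apply_partner {j m : ℕ} (hj : 1 ≤ j) (hjn : 2 * j ≤ n)
    (hm : 2 * j - 1 ≤ m ∧ m ≤ 2 * j) (x : ℕ → ℝ) : rfl' n (Bv j) x (partner m) = -x m := by
  rw [rfl'_Bv_apply hj hjn]
  unfold partner
  split_ifs <;> first | omega | (congr 2; omega)

variable (n) in
/-- `r_{β_1} ⋯ r_{β_t}`. -/
noncomputable def pairReflProd (t : ℕ) : Function.End (ℕ → ℝ) :=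
  (((List.range t).map (fun j => Bv (j + 1))).map (rfl' n)).prod

lemma pairReflProd_apply {t : ℕ} (ht : 2 * t ≤ n) (x : ℕ → ℝ) (m : ℕ) :
    pairReflProd n t x m = if 1 ≤ m ∧ m ≤ 2 * t then -x (partner m) else x m := by
  induction t generalizing x with
  | zero => simp [pairReflProd, Function.End.one_def]; omega
  | succ t ih =>
    have hsucc : pairReflProd n (t + 1) x = pairReflProd n t (rfl' n (Bv (t + 1)) x) := by
      simp only [pairReflProd, List.range_succ, List.map_append, List.prod_append, List.map_cons,
        List.map_nil, List.prod_cons, List.prod_nil, mul_one]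
      rfl
    rw [hsucc, ih (by omega)]
    simp only [rfl'_Bv_apply (by omega : 1 ≤ t + 1) ht, partner]
    split_ifs <;> first | omega | rfl | (congr 2; omega)

lemma pairReflProd_mem_signedPerms {t : ℕ} (ht : 2 * t ≤ n) :
    pairReflProd n t ∈ signedPerms n :=
  Submonoid.list_prod_mem _ fun f hf => by
    simp only [List.map_map, List.mem_map, List.mem_range, Function.comp_apply] at hf
    obtain ⟨j, hj, rfl⟩ := hf
    exact isSignedPerm_rfl'_Bv (by omega) (by omega)

end PairReflections

lemma col_mem_pair_of_mem_phiSet_rfl'_Bv {n : ℕ} {Pos : Set (ℕ → ℝ)}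
    (hPos : Pos = PosB n ∨ Pos = PosC n ∨ Pos = PosD n) {j : ℕ} (hj : 1 ≤ j) (hjn : 2 * j ≤ n)
    {α : ℕ → ℝ} (hα : α ∈ PhiSet Pos (rfl' n (Bv j))) : 2 * j - 1 ≤ col α ∧ col α ≤ 2 * j := by
  refine ⟨le_col_of_mem_phiSet_rfl' hPos (fun m hm => ?_) hα, not_lt.1 fun h => ?_⟩
  · simp [Bv, eps, show m ≠ 2 * j - 1 by omega, show m ≠ 2 * j by omega]
  · refine notMem_phiSet_of_agree hPos hα.1 (fun k _ => ?_) hα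
    have h1 := apply_eq_zero_of_lt_col (show 2 * j - 1 < col α by omega)
    have h2 := apply_eq_zero_of_lt_col (show 2 * j < col α by omega)
    rw [rfl'_Bv_apply hj hjn]
    split_ifs <;> subst_vars <;> simp [h1, h2]

lemma disjoint_phiSet_rfl'_Bv {n : ℕ} {Pos : Set (ℕ → ℝ)}
    (hPos : Pos = PosB n ∨ Pos = PosC n ∨ Pos = PosD n) {i j : ℕ} (hi : 1 ≤ i) (hin : 2 * i ≤ n)
    (hj : 1 ≤ j) (hjn : 2 * j ≤ n) (hij : i ≠ j) :
    Disjoint (PhiSet Pos (rfl' n (Bv i))) (PhiSet Pos (rfl' n (Bv j))) :=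
  Set.disjoint_left.2 fun _ hαi hαj => by
    have := col_mem_pair_of_mem_phiSet_rfl'_Bv hPos hi hin hαi
    have := col_mem_pair_of_mem_phiSet_rfl'_Bv hPos hj hjn hαj
    omega

lemma disjoint_phiSet_rfl'_Bv_of_col_eq {n t : ℕ} {Pos : Set (ℕ → ℝ)}
    (hPos : Pos = PosB n ∨ Pos = PosC n ∨ Pos = PosD n) {β : ℕ → ℝ} (hcol : col β = 2 * t + 1)
    {j : ℕ} (hj : 1 ≤ j) (hjt : j ≤ t) (hjn : 2 * j ≤ n) :
    Disjoint (PhiSet Pos (rfl' n (Bv j))) (PhiSet Pos (rfl' n β)) :=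
  Set.disjoint_left.2 fun _ hαj hαβ => by
    have := col_mem_pair_of_mem_phiSet_rfl'_Bv hPos hj hjn hαj
    have := le_col_of_mem_phiSet_rfl' hPos (fun _ => eq_zero_of_lt_of_col_eq hcol) hαβ
    omega

lemma sigma_eq (n t : ℕ) (β : ℕ → ℝ) :
    (((List.range t).map (fun j => Bv (j + 1)) ++ [β]).map (rfl' n)).prod =
      pairReflProd n t * rfl' n β := by
  simp [pairReflProd, List.prod_append]

section Sigma

variable {n t : ℕ} {Pos : Set (ℕ → ℝ)} {β : ℕ → ℝ}

lemma mem_phiSet_sigma_iff_of_lt_col (hn : 2 * t + 1 ≤ n) (hcol : col β = 2 * t + 1)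
    {α : ℕ → ℝ} (hα : 2 * t < col α) :
    α ∈ PhiSet Pos (pairReflProd n t * rfl' n β) ↔ α ∈ PhiSet Pos (rfl' n β) := by
  suffices h : pairReflProd n t (rfl' n β α) = rfl' n β α from
    and_congr_right fun _ => by rw [show (pairReflProd n t * rfl' n β) α = rfl' n β α from h]
  funext m
  rw [pairReflProd_apply (by omega)]
  split_ifs with hm
  · have hp : partner m < 2 * t + 1 := Nat.lt_succ_of_le (partner_le_two_mul hm.2)
    rw [rfl'_apply_of_eq_zero (eq_zero_of_lt_of_col_eq hcol hp),
      rfl'_apply_of_eq_zero (eq_zero_of_lt_of_col_eq hcol (by omega)),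
      apply_eq_zero_of_lt_col (by omega : partner m < col α),
      apply_eq_zero_of_lt_col (by omega : m < col α), neg_zero]
  · rfl

-- Both sides swap and negate the coordinates `2j - 1, 2j` of `α`, below which `α` vanishes.
lemma sigma_apply_eq_rfl'_Bv_apply (hn : 2 * t + 1 ≤ n) (hcol : col β = 2 * t + 1) {j : ℕ}
    (hj : 1 ≤ j) (hjt : j ≤ t) {α : ℕ → ℝ} (hα : 2 * j - 1 ≤ col α) {k : ℕ} (hk : k ≤ 2 * j) :
    (pairReflProd n t * rfl' n β) α k = rfl' n (Bv j) α k := by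
  change pairReflProd n t (rfl' n β α) k = _
  have hp : partner k < 2 * t + 1 := Nat.lt_succ_of_le (partner_le_two_mul (by omega))
  rw [rfl'_Bv_apply hj (by omega), pairReflProd_apply (by omega),
    rfl'_apply_of_eq_zero (eq_zero_of_lt_of_col_eq hcol hp)]
  by_cases hkj : k < 2 * j - 1
  · have hpk : partner k < col α := by
      have := partner_le_two_mul (show k ≤ 2 * (j - 1) by omega)
      omega
    rw [rfl'_apply_of_eq_zero (eq_zero_of_lt_of_col_eq hcol (by omega)),
      apply_eq_zero_of_lt_col hpk, apply_eq_zero_of_lt_col (by omega : k < col α)]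
    simp [show k ≠ 2 * j - 1 by omega, show k ≠ 2 * j by omega]
  · unfold partner
    split_ifs <;> first | omega | (congr 2; omega)

lemma mem_phiSet_sigma_iff_of_col_mem_pair (hPos : Pos = PosB n ∨ Pos = PosC n ∨ Pos = PosD n)
    (hn : 2 * t + 1 ≤ n) (hβ : β ∈ Pos) (hcol : col β = 2 * t + 1) {j : ℕ} (hj : 1 ≤ j)
    (hjt : j ≤ t) {α : ℕ → ℝ} (hα : 2 * j - 1 ≤ col α ∧ col α ≤ 2 * j) :
    α ∈ PhiSet Pos (pairReflProd n t * rfl' n β) ↔ α ∈ PhiSet Pos (rfl' n (Bv j)) := by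
  have hσ : IsSignedPerm n (pairReflProd n t * rfl' n β) :=
    (signedPerms n).mul_mem (pairReflProd_mem_signedPerms (by omega))
      (isSignedPerm_rfl'_of_mem hPos hβ)
  rw [hσ.mem_phiSet_iff hPos, (isSignedPerm_rfl'_Bv hj (by omega)).mem_phiSet_iff hPos]
  refine and_congr_right fun hαpos => ?_
  have hagree : ∀ k ≤ 2 * j, rfl' n (Bv j) α k = (pairReflProd n t * rfl' n β) α k := fun k hk =>
    (sigma_apply_eq_rfl'_Bv_apply hn hcol hj hjt hα.1 hk).symm
  have hv : rfl' n (Bv j) α (partner (col α)) ≠ 0 := by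
    rw [rfl'_Bv_apply_partner hj (by omega) hα, neg_ne_zero]
    exact (apply_col_pos_of_mem hPos hαpos).ne'
  have hpj : partner (col α) ≤ 2 * j := partner_le_two_mul hα.2
  rw [← col_eq_of_agree hagree hpj hv, ← hagree _ ((col_le hv).trans hpj)]

lemma mem_phiSet_sigma_iff (hPos : Pos = PosB n ∨ Pos = PosC n ∨ Pos = PosD n)
    (hn : 2 * t + 1 ≤ n) (hβ : β ∈ Pos) (hcol : col β = 2 * t + 1) {α : ℕ → ℝ} :
    α ∈ PhiSet Pos (pairReflProd n t * rfl' n β) ↔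
      (∃ j ∈ Finset.Icc 1 t, α ∈ PhiSet Pos (rfl' n (Bv j))) ∨ α ∈ PhiSet Pos (rfl' n β) := by
  have hβcol : α ∈ PhiSet Pos (rfl' n β) → 2 * t + 1 ≤ col α :=
    le_col_of_mem_phiSet_rfl' hPos fun _ => eq_zero_of_lt_of_col_eq hcol
  by_cases hα : col α ≤ 2 * t
  · refine ⟨fun h => ?_, ?_⟩
    · have hj : 2 * ((col α + 1) / 2) - 1 ≤ col α ∧ col α ≤ 2 * ((col α + 1) / 2) := by omega
      have h1 : 1 ≤ col α := one_le_col_of_mem hPos h.1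
      exact Or.inl ⟨_, Finset.mem_Icc.2 ⟨by omega, by omega⟩,
        (mem_phiSet_sigma_iff_of_col_mem_pair hPos hn hβ hcol (by omega) (by omega) hj).1 h⟩
    · rintro (⟨j, hj, h⟩ | h)
      · rw [Finset.mem_Icc] at hj
        exact (mem_phiSet_sigma_iff_of_col_mem_pair hPos hn hβ hcol hj.1 hj.2
          (col_mem_pair_of_mem_phiSet_rfl'_Bv hPos hj.1 (by omega) h)).2 h
      · exact absurd (hβcol h) (by omega)
  · rw [mem_phiSet_sigma_iff_of_lt_col hn hcol (by omega)]
    refine ⟨Or.inr, ?_⟩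
    rintro (⟨j, hj, h⟩ | h)
    · rw [Finset.mem_Icc] at hj
      exact absurd (col_mem_pair_of_mem_phiSet_rfl'_Bv hPos hj.1 (by omega) h).2 (by omega)
    · exact h

end Sigma

end BCDRoots

open BCDRoots in
/-- For `D = {β_1, …, β_t, β}` with `β_j = ε_{2j-1} + ε_{2j}` and `β` a positive root in column
`2t + 1`, the sets `Φ_{r_{β_j}}`, `Φ_{r_β}` are pairwise disjoint, `Φ_σ` is their union for
`σ = r_{β_1} ⋯ r_{β_t} r_β`, and hence `l(σ) = Σ_j l(r_{β_j}) + l(r_β)`. -/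
theorem stmt8 (n t : ℕ) (Pos : Set (ℕ → ℝ))
    (hPos : Pos = PosB n ∨ Pos = PosC n ∨ Pos = PosD n)
    (hn : 2 * t + 1 ≤ n) (β : ℕ → ℝ) (hβ : β ∈ Pos)
    (hcol : sInf {k | β k ≠ 0} = 2 * t + 1) :
    (∀ j1 ∈ Finset.Icc 1 t, ∀ j2 ∈ Finset.Icc 1 t, j1 ≠ j2 →
        Disjoint (PhiSet Pos (rfl' n (Bv j1))) (PhiSet Pos (rfl' n (Bv j2)))) ∧
    (∀ j ∈ Finset.Icc 1 t, Disjoint (PhiSet Pos (rfl' n (Bv j))) (PhiSet Pos (rfl' n β))) ∧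
    PhiSet Pos ((((List.range t).map (fun j => Bv (j + 1)) ++ [β]).map (rfl' n)).prod)
      = (⋃ j ∈ Finset.Icc 1 t, PhiSet Pos (rfl' n (Bv j))) ∪ PhiSet Pos (rfl' n β) ∧
    Set.ncard (PhiSet Pos ((((List.range t).map (fun j => Bv (j + 1)) ++ [β]).map (rfl' n)).prod))
      = (∑ j ∈ Finset.Icc 1 t, Set.ncard (PhiSet Pos (rfl' n (Bv j))))
        + Set.ncard (PhiSet Pos (rfl' n β)) := by
  have hpairs : ∀ i ∈ Finset.Icc 1 t, ∀ j ∈ Finset.Icc 1 t, i ≠ j →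
      Disjoint (PhiSet Pos (rfl' n (Bv i))) (PhiSet Pos (rfl' n (Bv j))) := fun i hi j hj hij => by
    rw [Finset.mem_Icc] at hi hj
    exact disjoint_phiSet_rfl'_Bv hPos hi.1 (by omega) hj.1 (by omega) hij
  have hbeta : ∀ j ∈ Finset.Icc 1 t,
      Disjoint (PhiSet Pos (rfl' n (Bv j))) (PhiSet Pos (rfl' n β)) := fun j hj => by
    rw [Finset.mem_Icc] at hj
    exact disjoint_phiSet_rfl'_Bv_of_col_eq hPos hcol hj.1 hj.2 (by omega)
  have hunion : PhiSet Pos ((((List.range t).map (fun j => Bv (j + 1)) ++ [β]).map (rfl' n)).prod)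
      = (⋃ j ∈ Finset.Icc 1 t, PhiSet Pos (rfl' n (Bv j))) ∪ PhiSet Pos (rfl' n β) := by
    ext α
    rw [sigma_eq, mem_phiSet_sigma_iff hPos hn hβ hcol]
    simp
  have hfin : ∀ w, (PhiSet Pos w).Finite := fun w => (finite_pos hPos).subset fun _ h => h.1
  refine ⟨hpairs, hbeta, hunion, ?_⟩
  rw [hunion, Set.ncard_union_eq (Set.disjoint_iUnion₂_left.2 hbeta)
      ((Finset.finite_toSet _).biUnion fun _ _ => hfin _) (hfin _),
    ← Finset.set_biUnion_coe, (Finset.finite_toSet _).ncard_biUnion (fun _ _ => hfin _) hpairs,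
    finsum_mem_coe_finset]
end

section
/- Let Φ ∈ {B_n, C_n, D_n}, and let α, γ, β ∈ Φ⁺ with α + γ = β. Exactly one of α, γ lies in S⁺(β) and the other in S⁻(β), where S⁺(β) consists of the summands sharing the column of β (with the stated modification for β = 2ε_i in C_n, where S⁺(2ε_i) = {ε_i + ε_l : i < l ≤ n}). -/
/-- The column of a root: the least index of a nonzero coordinate. -/
noncomputable def colv (v : ℕ → ℝ) : ℕ := sInf {k | v k ≠ 0}

open Classical in
/-- `S⁺(β)`: for `Φ = C_n` and `β = 2ε_i` it is `{ε_i + ε_l : i < l ≤ n}`; otherwise it is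
`S(β) ∩ C_{col β}`, the `β`-singular summands lying in the column of `β`. -/
noncomputable def Splus (n : ℕ) (Pos : Set (ℕ → ℝ)) (β : ℕ → ℝ) : Set (ℕ → ℝ) :=
  if Pos = PosC n ∧ ∃ i : ℕ, 1 ≤ i ∧ i ≤ n ∧ β = (2 : ℝ) • eps i then
    {v | ∃ i l : ℕ, β = (2 : ℝ) • eps i ∧ i < l ∧ l ≤ n ∧ v = eps i + eps l}
  else {γ ∈ Pos | β - γ ∈ Pos ∧ colv γ = colv β}

/-- `S⁻(β) = S(β) \ S⁺(β)`. -/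
noncomputable def Sminus (n : ℕ) (Pos : Set (ℕ → ℝ)) (β : ℕ → ℝ) : Set (ℕ → ℝ) :=
  {γ ∈ Pos | β - γ ∈ Pos} \ Splus n Pos β

/-!
A positive root `v` vanishes below its column `c = colv v`, and `v c ∈ {1, 2}`, with `v c = 2`
only for `v = 2ε_c` in `C_n`. If `α` and `γ` lie in different columns, the summand with the
smaller column shares the column of `β`; moreover `β ≠ 2ε_c`, since that would force that summand
to be `2ε_c` and the other one to vanish. So exactly that summand lies in `S⁺(β)`. If they lie in
the same column, the leading coefficients can only add up as `1 + 1 = 2`, so `β = 2ε_c` in `C_n`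
and `{α, γ} = {ε_c + ε_j, ε_c - ε_j}`, of which only `ε_c + ε_j` lies in `S⁺(β)`.
-/

lemma colv_eq_of_apply {v : ℕ → ℝ} {m : ℕ} (h0 : ∀ k < m, v k = 0) (hm : v m ≠ 0) :
    colv v = m := by
  refine le_antisymm (Nat.sInf_le hm) (not_lt.mp fun h => ?_)
  exact Nat.sInf_mem (s := {k | v k ≠ 0}) ⟨m, hm⟩ (h0 _ h)

lemma eps_sub_eps_ne_eps_add_eps {i j i' l : ℕ} (hij : i ≠ j) :
    eps i - eps j ≠ eps i' + eps l := by
  intro h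
  have hj := congrFun h j
  simp only [eps, Pi.sub_apply, Pi.add_apply] at hj
  split_ifs at hj <;> first | omega | norm_num at hj

section Roots

variable {n : ℕ} {Pos : Set (ℕ → ℝ)}

lemma root_cases (hPos : Pos = PosB n ∨ Pos = PosC n ∨ Pos = PosD n) {v : ℕ → ℝ}
    (hv : v ∈ Pos) :
    (∃ i j, 1 ≤ i ∧ i < j ∧ j ≤ n ∧ (v = eps i - eps j ∨ v = eps i + eps j)) ∨
    (∃ i, 1 ≤ i ∧ i ≤ n ∧ v = eps i) ∨
    (Pos = PosC n ∧ ∃ i, 1 ≤ i ∧ i ≤ n ∧ v = (2 : ℝ) • eps i) := by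
  rcases hPos with rfl | rfl | rfl
  · rcases hv with h | h <;> tauto
  · rcases hv with h | h <;> tauto
  · exact Or.inl hv

lemma exists_leading (hPos : Pos = PosB n ∨ Pos = PosC n ∨ Pos = PosD n) {v : ℕ → ℝ}
    (hv : v ∈ Pos) : ∃ i, (∀ k < i, v k = 0) ∧ (v i = 1 ∨ v i = 2) := by
  rcases root_cases hPos hv with ⟨i, j, -, hij, -, rfl | rfl⟩ | ⟨i, -, -, rfl⟩ | ⟨-, i, -, -, rfl⟩ <;>
    refine ⟨i, fun k hk => ?_, ?_⟩ <;>
    simp only [eps, Pi.add_apply, Pi.sub_apply, Pi.smul_apply, smul_eq_mul] <;>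
    split_ifs <;> first | omega | norm_num

lemma leading_of_mem (hPos : Pos = PosB n ∨ Pos = PosC n ∨ Pos = PosD n) {v : ℕ → ℝ}
    (hv : v ∈ Pos) : (∀ k < colv v, v k = 0) ∧ (v (colv v) = 1 ∨ v (colv v) = 2) := by
  obtain ⟨i, h0, hi⟩ := exists_leading hPos hv
  obtain rfl : colv v = i := colv_eq_of_apply h0 (by rcases hi with h | h <;> norm_num [h])
  exact ⟨h0, hi⟩

lemma eq_two_smul_eps_of_apply_eq_two (hPos : Pos = PosB n ∨ Pos = PosC n ∨ Pos = PosD n)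
    {v : ℕ → ℝ} (hv : v ∈ Pos) {k : ℕ} (hk : v k = 2) :
    Pos = PosC n ∧ 1 ≤ k ∧ k ≤ n ∧ v = (2 : ℝ) • eps k := by
  rcases root_cases hPos hv with ⟨i, j, -, hij, -, rfl | rfl⟩ | ⟨i, -, -, rfl⟩ | ⟨hC, i, h1, hn, rfl⟩
  all_goals simp only [eps, Pi.add_apply, Pi.sub_apply, Pi.smul_apply, smul_eq_mul] at hk
  all_goals split_ifs at hk with hki <;> norm_num at hk
  · omega
  · subst hki
    exact ⟨hC, h1, hn, rfl⟩

lemma eps_add_eps_mem_splus_and_eps_sub_eps_not_mem_splus (hC : Pos = PosC n) {c j : ℕ}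
    (hc1 : 1 ≤ c) (hcj : c < j) (hjn : j ≤ n) :
    eps c + eps j ∈ Splus n Pos ((2 : ℝ) • eps c) ∧
      eps c - eps j ∉ Splus n Pos ((2 : ℝ) • eps c) := by
  rw [Splus, if_pos ⟨hC, c, hc1, hcj.le.trans hjn, rfl⟩]
  exact ⟨⟨c, j, rfl, hcj, hjn, rfl⟩,
    fun ⟨_, _, _, _, _, h⟩ => eps_sub_eps_ne_eps_add_eps hcj.ne h⟩

lemma exists_eq_eps_sub_or_add_of_apply_colv_eq_one {v : ℕ → ℝ} (hv : v ∈ PosC n)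
    (h1 : v (colv v) = 1) :
    ∃ j, colv v < j ∧ j ≤ n ∧ (v = eps (colv v) - eps j ∨ v = eps (colv v) + eps j) := by
  obtain ⟨i, j, -, hij, hjn, hvij⟩ | ⟨i, -, -, rfl⟩ := hv
  · have hcol : colv v = i := by
      refine colv_eq_of_apply (fun k hk => ?_) ?_ <;> rcases hvij with rfl | rfl <;>
        simp only [eps, Pi.add_apply, Pi.sub_apply] <;> split_ifs <;> first | omega | norm_num
    exact ⟨j, hcol ▸ hij, hjn, hcol ▸ hvij⟩
  · simp only [eps, Pi.smul_apply, smul_eq_mul] at h1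
    split_ifs at h1 <;> norm_num at h1

end Roots

section Summands

variable {n : ℕ} {Pos : Set (ℕ → ℝ)} {α γ β : ℕ → ℝ}

lemma mem_splus_and_not_mem_splus_of_colv_lt
    (hPos : Pos = PosB n ∨ Pos = PosC n ∨ Pos = PosD n) (hα : α ∈ Pos) (hγ : γ ∈ Pos)
    (hsum : α + γ = β) (hlt : colv α < colv γ) :
    α ∈ Splus n Pos β ∧ γ ∉ Splus n Pos β := by
  obtain ⟨hα0, hαc⟩ := leading_of_mem hPos hα
  obtain ⟨hγ0, hγc⟩ := leading_of_mem hPos hγ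
  generalize hc : colv α = c at hα0 hαc hlt
  have hβ_apply : ∀ k, β k = α k + γ k := fun k => (congrFun hsum k).symm
  have hβc : β c = α c := by rw [hβ_apply, hγ0 _ hlt, add_zero]
  have hcolβ : colv β = c := by
    refine colv_eq_of_apply (fun k hk => ?_) ?_
    · rw [hβ_apply, hα0 _ hk, hγ0 _ (hk.trans hlt), add_zero]
    · rcases hαc with h | h <;> norm_num [hβc, h]
  have hβ_ne : ¬(Pos = PosC n ∧ ∃ i, 1 ≤ i ∧ i ≤ n ∧ β = (2 : ℝ) • eps i) := by
    rintro ⟨-, i, -, -, rfl⟩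
    obtain rfl : c = i := by
      by_contra hne
      rcases hαc with h | h <;> simp [← hβc, eps, hne] at h
    have hα2 : α c = 2 := by rw [← hβc]; simp [eps]
    obtain ⟨-, -, -, rfl⟩ := eq_two_smul_eps_of_apply_eq_two hPos hα hα2
    have hγ_zero : γ = 0 := by simpa using hsum
    rcases hγc with h | h <;> simp [hγ_zero] at h
  rw [Splus, if_neg hβ_ne]
  refine ⟨⟨hα, ?_, by rw [hc, hcolβ]⟩, fun h => hlt.ne (h.2.2.trans hcolβ).symm⟩
  rwa [← hsum, add_sub_cancel_left]

lemma mem_splus_iff_not_mem_splus_of_colv_eq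
    (hPos : Pos = PosB n ∨ Pos = PosC n ∨ Pos = PosD n) (hα : α ∈ Pos) (hγ : γ ∈ Pos)
    (hβ : β ∈ Pos) (hsum : α + γ = β) (hcol : colv α = colv γ) :
    α ∈ Splus n Pos β ↔ γ ∉ Splus n Pos β := by
  obtain ⟨hα0, hαc⟩ := leading_of_mem hPos hα
  obtain ⟨hγ0, hγc⟩ := leading_of_mem hPos hγ
  rw [← hcol] at hγ0 hγc
  generalize hc : colv α = c at hα0 hαc hγ0 hγc
  have hβ_apply : ∀ k, β k = α k + γ k := fun k => (congrFun hsum k).symm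
  have hcolβ : colv β = c := by
    refine colv_eq_of_apply (fun k hk => ?_) ?_
    · rw [hβ_apply, hα0 _ hk, hγ0 _ hk, add_zero]
    · rcases hαc with h | h <;> rcases hγc with h' | h' <;> norm_num [hβ_apply, h, h']
  obtain ⟨-, hβc⟩ := leading_of_mem hPos hβ
  rw [hcolβ, hβ_apply] at hβc
  obtain ⟨hα1, hγ1⟩ : α c = 1 ∧ γ c = 1 := by
    rcases hαc with h | h <;> rcases hγc with h' | h' <;> rcases hβc with h'' | h'' <;>
      constructor <;> linarith
  obtain ⟨hC, hc1, -, rfl⟩ :=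
    eq_two_smul_eps_of_apply_eq_two hPos hβ (k := c) (by rw [hβ_apply, hα1, hγ1]; norm_num)
  obtain ⟨j, hcj, hjn, hαj⟩ :=
    exists_eq_eps_sub_or_add_of_apply_colv_eq_one (hC ▸ hα) (hc ▸ hα1)
  rw [hc] at hcj hαj
  have hγ_eq : γ = (2 : ℝ) • eps c - α := by rw [← hsum, add_sub_cancel_left]
  obtain ⟨hmem, hnot⟩ := eps_add_eps_mem_splus_and_eps_sub_eps_not_mem_splus hC hc1 hcj hjn
  rcases hαj with rfl | rfl
  · obtain rfl : γ = eps c + eps j := by rw [hγ_eq, two_smul, add_sub_sub_cancel]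
    tauto
  · obtain rfl : γ = eps c - eps j := by rw [hγ_eq, two_smul, add_sub_add_left_eq_sub]
    tauto

lemma xor_of_mem_splus_iff_not_mem_splus (hα : α ∈ Pos) (hγ : γ ∈ Pos) (hsum : α + γ = β)
    (h : α ∈ Splus n Pos β ↔ γ ∉ Splus n Pos β) :
    Xor (α ∈ Splus n Pos β ∧ γ ∈ Sminus n Pos β)
      (γ ∈ Splus n Pos β ∧ α ∈ Sminus n Pos β) := by
  have hα_minus : α ∈ Sminus n Pos β ↔ α ∉ Splus n Pos β := by
    rw [Sminus, Set.mem_sdiff, Set.mem_ofPred_eq, ← hsum, add_sub_cancel_left]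
    exact and_iff_right ⟨hα, hγ⟩
  have hγ_minus : γ ∈ Sminus n Pos β ↔ γ ∉ Splus n Pos β := by
    rw [Sminus, Set.mem_sdiff, Set.mem_ofPred_eq, ← hsum, add_sub_cancel_right]
    exact and_iff_right ⟨hγ, hα⟩
  rw [Xor, hα_minus, hγ_minus]
  tauto

end Summands

/-- If `α + γ = β` with `α, γ, β ∈ Φ⁺` for `Φ ∈ {B_n, C_n, D_n}`, then exactly one of `α, γ`
lies in `S⁺(β)` and the other in `S⁻(β)`. -/
theorem stmt19 (n : ℕ) (Pos : Set (ℕ → ℝ))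
    (hPos : Pos = PosB n ∨ Pos = PosC n ∨ Pos = PosD n)
    (α γ β : ℕ → ℝ) (hα : α ∈ Pos) (hγ : γ ∈ Pos) (hβ : β ∈ Pos) (hsum : α + γ = β) :
    Xor' (α ∈ Splus n Pos β ∧ γ ∈ Sminus n Pos β)
         (γ ∈ Splus n Pos β ∧ α ∈ Sminus n Pos β) := by
  refine xor_of_mem_splus_iff_not_mem_splus hα hγ hsum ?_
  rcases lt_trichotomy (colv α) (colv γ) with hlt | hcol | hgt
  · obtain ⟨hα_plus, hγ_plus⟩ := mem_splus_and_not_mem_splus_of_colv_lt hPos hα hγ hsum hlt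
    exact iff_of_true hα_plus hγ_plus
  · exact mem_splus_iff_not_mem_splus_of_colv_eq hPos hα hγ hβ hsum hcol
  · obtain ⟨hγ_plus, hα_plus⟩ :=
      mem_splus_and_not_mem_splus_of_colv_lt hPos hγ hα ((add_comm γ α).trans hsum) hgt
    exact iff_of_false hα_plus (not_not.mpr hγ_plus)
end
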